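/- If A is a nonzero bounded self-adjoint operator on L²(V) with finite chromatic number (V partitions into finitely many independent sets), then m(A) < 0 and M(A) > 0. -/

import Mathlib

/-!
Since `A` is nonzero and self-adjoint, some `u` has `⟪A u, u⟫ ≠ 0`. Split `u = ∑ uᵢ` along the
independent sets, so `⟪A uᵢ, uᵢ⟫ = 0`. Averaged over all sign patterns `ε ∈ {±1}ᵏ`, the cross
terms of `⟪A (∑ εᵢ uᵢ), ∑ εᵢ uᵢ⟫` cancel, so these real numbers sum to `2ᵏ ∑ ⟪A uᵢ, uᵢ⟫ = 0`;
as the term `ε = 1` is nonzero, some terms are negative and some positive.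
-/

open MeasureTheory

theorem sum_units_int_mul_eq_zero {ι : Type*} [Fintype ι] [DecidableEq ι] {i j : ι}
    (hij : i ≠ j) :
    ∑ ε : ι → ℤˣ, ((ε i : ℤ) * ε j) = 0 := by
  -- flipping the `i`-th sign permutes the sign patterns and negates each summand
  have hflip : ∑ ε : ι → ℤˣ, ((ε i : ℤ) * ε j) = -∑ ε : ι → ℤˣ, ((ε i : ℤ) * ε j) := by
    conv_lhs => rw [← Equiv.sum_comp (Equiv.mulRight (Pi.mulSingle i (-1)))]
    rw [← Finset.sum_neg_distrib]
    refine Finset.sum_congr rfl fun ε _ => ?_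
    simp [Pi.mulSingle_eq_of_ne hij.symm]
  omega

section InnerProduct

open Finset RCLike InnerProductSpace

variable {𝕜 E : Type*} [RCLike 𝕜] [NormedAddCommGroup E] [InnerProductSpace 𝕜 E]

theorem sum_units_int_inner_map_sum_smul {ι : Type*} [Fintype ι] [DecidableEq ι]
    (T : E →ₗ[𝕜] E) (v : ι → E) :
    ∑ ε : ι → ℤˣ, ⟪T (∑ i, ((ε i : ℤ) : 𝕜) • v i), ∑ i, ((ε i : ℤ) : 𝕜) • v i⟫_𝕜 =
      Fintype.card (ι → ℤˣ) • ∑ i, ⟪T (v i), v i⟫_𝕜 := by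
  have hexpand : ∀ ε : ι → ℤˣ,
      ⟪T (∑ i, ((ε i : ℤ) : 𝕜) • v i), ∑ i, ((ε i : ℤ) : 𝕜) • v i⟫_𝕜 =
        ∑ i, ∑ j, (((ε i : ℤ) * ε j : ℤ) : 𝕜) * ⟪T (v i), v j⟫_𝕜 := by
    intro ε
    simp only [map_sum, map_smul, sum_inner, inner_sum, inner_smul_left, inner_smul_right,
      map_intCast, Finset.mul_sum]
    rw [Finset.sum_comm]
    refine Finset.sum_congr rfl fun i _ => Finset.sum_congr rfl fun j _ => ?_
    push_cast
    ring
  simp_rw [hexpand, Finset.sum_comm (γ := ι → ℤˣ), ← Finset.sum_mul, ← Int.cast_sum,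
    Finset.smul_sum]
  refine Finset.sum_congr rfl fun i _ => ?_
  rw [Finset.sum_eq_single i]
  · simp
  · intro j _ hji
    rw [sum_units_int_mul_eq_zero hji.symm]
    simp
  · simp

theorem exists_re_inner_map_self_neg_and_pos {ι : Type*} [Fintype ι] {T : E →ₗ[𝕜] E}
    {v : ι → E} (hdiag : ∀ i, ⟪T (v i), v i⟫_𝕜 = 0)
    (hsum : re ⟪T (∑ i, v i), ∑ i, v i⟫_𝕜 ≠ 0) :
    (∃ x, re ⟪T x, x⟫_𝕜 < 0) ∧ ∃ x, 0 < re ⟪T x, x⟫_𝕜 := by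
  classical
  set w : (ι → ℤˣ) → E := fun ε => ∑ i, ((ε i : ℤ) : 𝕜) • v i
  have hzero : ∑ ε, re ⟪T (w ε), w ε⟫_𝕜 = 0 := by
    rw [← map_sum, sum_units_int_inner_map_sum_smul]
    simp [hdiag]
  have hnonzero : ∃ ε ∈ univ, re ⟪T (w ε), w ε⟫_𝕜 ≠ 0 := ⟨1, mem_univ _, by simpa [w] using hsum⟩
  constructor
  · obtain ⟨ε, -, hε⟩ := exists_pos_of_sum_zero_of_exists_nonzero (s := univ)
      (fun ε => -re ⟪T (w ε), w ε⟫_𝕜) (by rw [sum_neg_distrib, hzero, neg_zero])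
      (hnonzero.imp fun _ ⟨hmem, hne⟩ => ⟨hmem, neg_ne_zero.mpr hne⟩)
    exact ⟨w ε, neg_pos.mp hε⟩
  · obtain ⟨ε, -, hε⟩ := exists_pos_of_sum_zero_of_exists_nonzero _ hzero hnonzero
    exact ⟨w ε, hε⟩

theorem LinearMap.IsSymmetric.exists_re_inner_map_self_ne_zero {T : E →ₗ[𝕜] E}
    (hT : T.IsSymmetric) (hT0 : T ≠ 0) : ∃ x, re ⟪T x, x⟫_𝕜 ≠ 0 := by
  by_contra! h
  refine hT0 (hT.inner_map_self_eq_zero.mp fun x => ?_)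
  rw [← conj_eq_iff_re.mp (hT.conj_inner_sym x x), h x, ofReal_zero]

theorem re_inner_map_smul_self (T : E →ₗ[𝕜] E) (c : 𝕜) (x : E) :
    re ⟪T (c • x), c • x⟫_𝕜 = ‖c‖ ^ 2 * re ⟪T x, x⟫_𝕜 := by
  rw [map_smul, inner_smul_left, inner_smul_right, ← mul_assoc, RCLike.conj_mul, ← ofReal_pow,
    re_ofReal_mul]

theorem exists_norm_eq_one_re_inner_map_self_eq (T : E →ₗ[𝕜] E) {x : E} (hx : x ≠ 0) :
    ∃ y, ‖y‖ = 1 ∧ re ⟪T y, y⟫_𝕜 = ‖x‖⁻¹ ^ 2 * re ⟪T x, x⟫_𝕜 :=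
  ⟨((‖x‖⁻¹ : ℝ) : 𝕜) • x, by simpa using norm_smul_inv_norm (𝕜 := 𝕜) hx,
    by rw [re_inner_map_smul_self, norm_ofReal, abs_inv, abs_norm]⟩

theorem lt_zero_of_mem_lowerBounds_re_inner_map_self {T : E →ₗ[𝕜] E} {m : ℝ}
    (hm : m ∈ lowerBounds {r : ℝ | ∃ f : E, ‖f‖ = 1 ∧ r = re ⟪T f, f⟫_𝕜}) {x : E}
    (hx : re ⟪T x, x⟫_𝕜 < 0) : m < 0 := by
  have hx0 : x ≠ 0 := by rintro rfl; simp at hx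
  obtain ⟨y, hy1, hy⟩ := exists_norm_eq_one_re_inner_map_self_eq T hx0
  calc m ≤ re ⟪T y, y⟫_𝕜 := hm ⟨y, hy1, rfl⟩
    _ < 0 := by rw [hy]; exact mul_neg_of_pos_of_neg (by positivity) hx

theorem pos_of_mem_upperBounds_re_inner_map_self {T : E →ₗ[𝕜] E} {M : ℝ}
    (hM : M ∈ upperBounds {r : ℝ | ∃ f : E, ‖f‖ = 1 ∧ r = re ⟪T f, f⟫_𝕜}) {x : E}
    (hx : 0 < re ⟪T x, x⟫_𝕜) : 0 < M := by
  have hx0 : x ≠ 0 := by rintro rfl; simp at hx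
  obtain ⟨y, hy1, hy⟩ := exists_norm_eq_one_re_inner_map_self_eq T hx0
  calc 0 < re ⟪T y, y⟫_𝕜 := by rw [hy]; exact mul_pos (by positivity) hx
    _ ≤ M := hM ⟨y, hy1, rfl⟩

end InnerProduct

theorem Set.sum_indicator_eq_of_existsUnique {α ι M : Type*} [Fintype ι] [AddCommMonoid M]
    {C : ι → Set α} (hC : ∀ x, ∃! i, x ∈ C i) (f : α → M) :
    ∑ i, (C i).indicator f = f := by
  funext x
  obtain ⟨i, hi, huniq⟩ := hC x
  rw [Finset.sum_apply, Finset.sum_eq_single i (fun j _ hji => indicator_of_notMem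
    (fun hj => hji (huniq j hj)) f) (fun h => (h (Finset.mem_univ i)).elim),
    indicator_of_mem hi]

theorem MeasureTheory.Lp.exists_sum_eq_of_partition {α ι E : Type*} [MeasurableSpace α]
    [Fintype ι] [NormedAddCommGroup E] {p : ENNReal} {μ : Measure α} {C : ι → Set α}
    (hCm : ∀ i, MeasurableSet (C i)) (hC : ∀ x, ∃! i, x ∈ C i) (u : Lp E p μ) :
    ∃ v : ι → Lp E p μ, ∑ i, v i = u ∧ ∀ i, ∀ᵐ x ∂μ, x ∉ C i → v i x = 0 := by
  set v : ι → Lp E p μ := fun i => ((Lp.memLp u).indicator (hCm i)).toLp _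
  have hv : ∀ i, v i =ᵐ[μ] (C i).indicator u := fun i => MemLp.coeFn_toLp _
  refine ⟨v, Lp.ext ?_, fun i => ?_⟩
  · filter_upwards [Lp.coeFn_finsetSum Finset.univ v, ae_all_iff.mpr hv] with x hsum hvx
    rw [hsum, Finset.sum_apply, Finset.sum_congr rfl fun i _ => hvx i, ← Finset.sum_apply,
      Set.sum_indicator_eq_of_existsUnique hC]
  · filter_upwards [hv i] with x hvx hx
    rw [hvx, Set.indicator_of_notMem hx]

/-- A nonzero bounded self-adjoint operator on `L²(V)` with finite chromatic
number satisfies `m(A) < 0` and `M(A) > 0`. -/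
theorem endpoints_signs_of_finite_chromatic {V : Type*} [MeasurableSpace V]
    (μ : Measure V)
    (A : Lp ℂ 2 μ →L[ℂ] Lp ℂ 2 μ) (hA0 : A ≠ 0)
    (hsa : ∀ f g : Lp ℂ 2 μ, (inner ℂ (A f) g : ℂ) = inner ℂ f (A g))
    (m M : ℝ)
    (hm : IsGLB {r : ℝ | ∃ f : Lp ℂ 2 μ, ‖f‖ = 1 ∧ r = (inner ℂ (A f) f : ℂ).re} m)
    (hM : IsLUB {r : ℝ | ∃ f : Lp ℂ 2 μ, ‖f‖ = 1 ∧ r = (inner ℂ (A f) f : ℂ).re} M)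
    (k : ℕ) (C : Fin k → Set V) (hCm : ∀ i, MeasurableSet (C i))
    (hpart : ∀ x : V, ∃! i, x ∈ C i)
    (hind : ∀ i, ∀ f : Lp ℂ 2 μ, (∀ᵐ x ∂μ, x ∉ C i → f x = 0) →
      (inner ℂ (A f) f : ℂ) = 0) :
    m < 0 ∧ 0 < M := by
  obtain ⟨u, hu⟩ := LinearMap.IsSymmetric.exists_re_inner_map_self_ne_zero
    (T := (A : Lp ℂ 2 μ →ₗ[ℂ] Lp ℂ 2 μ)) hsa (ContinuousLinearMap.coe_injective.ne hA0)
  obtain ⟨v, hv_sum, hv_supp⟩ := Lp.exists_sum_eq_of_partition hCm hpart u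
  obtain ⟨⟨x, hx⟩, ⟨y, hy⟩⟩ := exists_re_inner_map_self_neg_and_pos
    (T := (A : Lp ℂ 2 μ →ₗ[ℂ] Lp ℂ 2 μ)) (fun i => hind i (v i) (hv_supp i)) (by rwa [hv_sum])
  exact ⟨lt_zero_of_mem_lowerBounds_re_inner_map_self hm.1 hx,
    pos_of_mem_upperBounds_re_inner_map_self hM.1 hy⟩
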